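/- arXiv:2107.07479 — 4 statements merged into one kernel-verified Lean document; each statement's English description precedes it below -/
import Mathlib

section
/- Let Ω be a convex set, g a fixed vector, and for α > 0 let y(α) be the unique projection of x - αg onto Ω. Then for 0 < α ≤ β, the directional decrease satisfies -gᵀ(y(α) - x) ≤ -gᵀ(y(β) - x). -/
open scoped RealInnerProductSpace

lemma var_ineq_aux {E : Type*} [NormedAddCommGroup E] [InnerProductSpace ℝ E]
    {Ω : Set E} (hconv : Convex ℝ Ω) {u v : E} (hv : v ∈ Ω)
    (hmin : ∀ z ∈ Ω, ‖u - v‖ ≤ ‖u - z‖) {w : E} (hw : w ∈ Ω) :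
    ⟪u - v, w - v⟫ ≤ 0 := by
  have hkey : ∀ t : ℝ, 0 < t → t ≤ 1 → 2 * ⟪u - v, w - v⟫ ≤ t * ‖w - v‖ ^ 2 := by
    intro t ht ht1
    have hmem : v + t • (w - v) ∈ Ω := by
      have := hconv hv hw (by linarith : (0:ℝ) ≤ 1 - t) ht.le (by ring)
      have heq : (1 - t) • v + t • w = v + t • (w - v) := by module
      rwa [heq] at this
    have hle := hmin _ hmem
    have hveq : u - (v + t • (w - v)) = (u - v) - t • (w - v) := by module
    rw [hveq] at hle
    have hsq : ‖u - v‖ ^ 2 ≤ ‖(u - v) - t • (w - v)‖ ^ 2 := by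
      exact pow_le_pow_left₀ (norm_nonneg _) hle 2
    have hexp : ‖(u - v) - t • (w - v)‖ ^ 2 =
        ‖u - v‖ ^ 2 - 2 * (t * ⟪u - v, w - v⟫) + t ^ 2 * ‖w - v‖ ^ 2 := by
      rw [norm_sub_sq_real, real_inner_smul_right, norm_smul]
      rw [Real.norm_eq_abs, abs_of_pos ht]
      ring
    rw [hexp] at hsq
    have h1 : 2 * (t * ⟪u - v, w - v⟫) ≤ t ^ 2 * ‖w - v‖ ^ 2 := by linarith
    have h2 : t * (2 * ⟪u - v, w - v⟫) ≤ t * (t * ‖w - v‖ ^ 2) := by nlinarith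
    exact le_of_mul_le_mul_left h2 ht
  by_contra hpos
  push_neg at hpos
  set c := ⟪u - v, w - v⟫ with hc
  set D := ‖w - v‖ ^ 2 with hD
  have hD0 : 0 ≤ D := sq_nonneg _
  rcases eq_or_lt_of_le hD0 with hDz | hDp
  · have := hkey 1 one_pos le_rfl
    rw [← hDz] at this
    linarith
  · have ht : 0 < min 1 (c / D) := lt_min one_pos (div_pos hpos hDp)
    have := hkey (min 1 (c / D)) ht (min_le_left _ _)
    have h3 : min 1 (c / D) * D ≤ (c / D) * D := by
      exact mul_le_mul_of_nonneg_right (min_le_right _ _) hD0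
    rw [div_mul_cancel₀ c (ne_of_gt hDp)] at h3
    linarith

theorem stmt_4 (n : ℕ) (Ω : Set (EuclideanSpace ℝ (Fin n)))
    (hne : Ω.Nonempty) (hcl : IsClosed Ω) (hconv : Convex ℝ Ω)
    (x g : EuclideanSpace ℝ (Fin n)) (hx : x ∈ Ω)
    (y : ℝ → EuclideanSpace ℝ (Fin n))
    (hy : ∀ α, 0 < α → y α ∈ Ω ∧ ∀ z ∈ Ω, ‖x - α • g - y α‖ ≤ ‖x - α • g - z‖)
    (α β : ℝ) (hα : 0 < α) (hαβ : α ≤ β) :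
    -⟪g, y α - x⟫ ≤ -⟪g, y β - x⟫ := by
  rcases eq_or_lt_of_le hαβ with rfl | hlt
  · exact le_refl _
  have hβ : 0 < β := lt_trans hα hlt
  obtain ⟨hαΩ, hαmin⟩ := hy α hα
  obtain ⟨hβΩ, hβmin⟩ := hy β hβ
  have h1 : ⟪x - α • g - y α, y β - y α⟫ ≤ 0 := var_ineq_aux hconv hαΩ hαmin hβΩ
  have h2 : ⟪x - β • g - y β, y α - y β⟫ ≤ 0 := var_ineq_aux hconv hβΩ hβmin hαΩ
  have h2' : ⟪x - β • g - y β, y β - y α⟫ = -⟪x - β • g - y β, y α - y β⟫ := by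
    rw [← inner_neg_right]; congr 1; abel
  have h3 : ⟪(x - α • g - y α) - (x - β • g - y β), y β - y α⟫ ≤ 0 := by
    rw [inner_sub_left]; linarith
  have hvec : (x - α • g - y α) - (x - β • g - y β) = (β - α) • g + (y β - y α) := by
    module
  rw [hvec, inner_add_left, real_inner_smul_left] at h3
  have hself : (0:ℝ) ≤ ⟪y β - y α, y β - y α⟫ := real_inner_self_nonneg
  have hc : ⟪g, y β - y α⟫ ≤ 0 := by nlinarith [sub_pos.mpr hlt]
  have hdiff : ⟪g, y β - x⟫ - ⟪g, y α - x⟫ = ⟪g, y β - y α⟫ := by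
    simp only [inner_sub_right]; ring
  linarith
end

section
/- With the same setup, define E(α) := -gᵀ(y(α) - x) + (1/α² - 1/α)‖y(α) - x‖². Then E is monotone: for 0 < α ≤ β ≤ 1, E(β) ≤ E(α). -/
open scoped RealInnerProductSpace

private lemma proj_vi {n : ℕ} {Ω : Set (EuclideanSpace ℝ (Fin n))}
    (hconv : Convex ℝ Ω) {p u : EuclideanSpace ℝ (Fin n)} (hu : u ∈ Ω)
    (hmin : ∀ z ∈ Ω, ‖p - u‖ ≤ ‖p - z‖) {z : EuclideanSpace ℝ (Fin n)} (hz : z ∈ Ω) :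
    ⟪p - u, z - u⟫ ≤ 0 := by
  have key : ∀ t : ℝ, 0 < t → t ≤ 1 → 2 * ⟪p - u, z - u⟫ ≤ t * ‖z - u‖ ^ 2 := by
    intro t ht ht1
    have hzt : u + t • (z - u) ∈ Ω := by
      have h := hconv hu hz (by linarith : (0:ℝ) ≤ 1 - t) ht.le (by ring)
      have he : (1 - t) • u + t • z = u + t • (z - u) := by
        rw [smul_sub, sub_smul, one_smul]; abel
      rwa [he] at h
    have h2 : ‖p - u‖ ^ 2 ≤ ‖(p - u) - t • (z - u)‖ ^ 2 := by
      have h3 : p - (u + t • (z - u)) = (p - u) - t • (z - u) := by abel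
      rw [← h3]
      exact pow_le_pow_left₀ (norm_nonneg _) (hmin _ hzt) 2
    have hexp : ‖(p - u) - t • (z - u)‖ ^ 2
        = ‖p - u‖ ^ 2 - 2 * (t * ⟪p - u, z - u⟫) + t ^ 2 * ‖z - u‖ ^ 2 := by
      rw [norm_sub_sq_real, real_inner_smul_right, norm_smul, Real.norm_eq_abs,
        abs_of_pos ht]
      ring
    rw [hexp] at h2
    nlinarith [h2, ht, mul_pos ht ht]
  by_contra h
  push_neg at h
  set c := ⟪p - u, z - u⟫ with hc
  set M := ‖z - u‖ ^ 2 with hM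
  have hM0 : 0 ≤ M := sq_nonneg _
  have hden : (0:ℝ) < M + 1 := by linarith
  have ht0 : 0 < min 1 (c / (M + 1)) := lt_min one_pos (div_pos h hden)
  have hkey := key _ ht0 (min_le_left _ _)
  have h2 : min 1 (c / (M + 1)) * M ≤ (c / (M + 1)) * M :=
    mul_le_mul_of_nonneg_right (min_le_right _ _) hM0
  have h3 : 2 * c ≤ (c / (M + 1)) * M := le_trans hkey h2
  rw [div_mul_eq_mul_div, le_div_iff₀ hden] at h3
  nlinarith

theorem stmt_5 (n : ℕ) (Ω : Set (EuclideanSpace ℝ (Fin n)))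
    (hne : Ω.Nonempty) (hcl : IsClosed Ω) (hconv : Convex ℝ Ω)
    (x g : EuclideanSpace ℝ (Fin n)) (hx : x ∈ Ω)
    (y : ℝ → EuclideanSpace ℝ (Fin n))
    (hy : ∀ α, 0 < α → y α ∈ Ω ∧ ∀ z ∈ Ω, ‖x - α • g - y α‖ ≤ ‖x - α • g - z‖)
    (E : ℝ → ℝ)
    (hE : ∀ α, E α = -⟪g, y α - x⟫ + (1 / α ^ 2 - 1 / α) * ‖y α - x‖ ^ 2)
    (α β : ℝ) (hα : 0 < α) (hαβ : α ≤ β) (hβ : β ≤ 1) :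
    E β ≤ E α := by
  have hβ0 : 0 < β := lt_of_lt_of_le hα hαβ
  obtain ⟨hyαΩ, hyαmin⟩ := hy α hα
  obtain ⟨hyβΩ, hyβmin⟩ := hy β hβ0
  rw [hE α, hE β]
  set a : EuclideanSpace ℝ (Fin n) := y α - x with ha
  set b : EuclideanSpace ℝ (Fin n) := y β - x with hb
  set A : ℝ := ‖a‖ with hA
  set B : ℝ := ‖b‖ with hB
  set P : ℝ := ⟪a, b⟫ with hP
  set Ga : ℝ := ⟪g, a⟫ with hGa
  set Gb : ℝ := ⟪g, b⟫ with hGb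
  have hA0 : 0 ≤ A := norm_nonneg _
  have hB0 : 0 ≤ B := norm_nonneg _
  -- Variational inequalities
  have hVIα : ⟪(x - α • g) - y α, y β - y α⟫ ≤ 0 := proj_vi hconv hyαΩ hyαmin hyβΩ
  have hVIβ : ⟪(x - β • g) - y β, y α - y β⟫ ≤ 0 := proj_vi hconv hyβΩ hyβmin hyαΩ
  have e1 : (x - α • g) - y α = -a - α • g := by rw [ha]; abel
  have e2 : y β - y α = b - a := by rw [ha, hb]; abel
  have e3 : (x - β • g) - y β = -b - β • g := by rw [hb]; abel
  have e4 : y α - y β = a - b := by rw [ha, hb]; abel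
  rw [e1, e2] at hVIα
  rw [e3, e4] at hVIβ
  have exp1 : ⟪-a - α • g, b - a⟫ = -P + A ^ 2 - α * Gb + α * Ga := by
    simp only [inner_sub_left, inner_sub_right, inner_neg_left, real_inner_smul_left,
      real_inner_self_eq_norm_sq, ← hP, ← hGa, ← hGb, ← hA, real_inner_comm b a]
    ring
  have exp2 : ⟪-b - β • g, a - b⟫ = -P + B ^ 2 - β * Ga + β * Gb := by
    simp only [inner_sub_left, inner_sub_right, inner_neg_left, real_inner_smul_left,
      real_inner_self_eq_norm_sq, ← hP, ← hGa, ← hGb, ← hB]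
    rw [real_inner_comm]
    rw [← hP]
    ring
  rw [exp1] at hVIα
  rw [exp2] at hVIβ
  have hCS : P ≤ A * B := real_inner_le_norm a b
  clear_value A B P Ga Gb
  clear exp1 exp2 e1 e2 e3 e4 ha hb hA hB hP hGa hGb hyαmin hyβmin hy hE hne hcl
    hconv hx hyαΩ hyβΩ a b x g y E Ω n
  -- combined monotonicity facts
  have hcomb : (β * A - α * B) * (A - B) ≤ 0 := by nlinarith
  have hAB : A ≤ B := by
    by_contra h
    push_neg at h
    have h1 : 0 < β * A - α * B := by nlinarith
    nlinarith [mul_pos h1 (sub_pos.mpr h)]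
  have hαβAB : α * B ≤ β * A := by
    by_contra h
    push_neg at h
    have hA_lt : A < B := by nlinarith
    nlinarith [mul_pos (sub_pos.mpr h) (sub_pos.mpr hA_lt)]
  -- From hVIα and Cauchy-Schwarz
  have hGbound : α * (Ga - Gb) ≤ A * B - A ^ 2 := by nlinarith
  -- Key scalar inequality (goal multiplied by α²β²)
  have key : α ^ 2 * β ^ 2 * (-Gb + (1 / β ^ 2 - 1 / β) * B ^ 2) ≤
      α ^ 2 * β ^ 2 * (-Ga + (1 / α ^ 2 - 1 / α) * A ^ 2) := by
    have r1 : α ^ 2 * β ^ 2 * (-Gb + (1 / β ^ 2 - 1 / β) * B ^ 2)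
        = -(α ^ 2 * β ^ 2 * Gb) + α ^ 2 * (1 - β) * B ^ 2 := by
      field_simp
    have r2 : α ^ 2 * β ^ 2 * (-Ga + (1 / α ^ 2 - 1 / α) * A ^ 2)
        = -(α ^ 2 * β ^ 2 * Ga) + β ^ 2 * (1 - α) * A ^ 2 := by
      field_simp
    rw [r1, r2]
    have t1 : 0 ≤ (1 - β) * ((β * A - α * B) * (β * A + α * B)) := by
      apply mul_nonneg (by linarith)
      apply mul_nonneg (by linarith)
      nlinarith
    have t2 : 0 ≤ β ^ 2 * A * (β * A - α * B) := by
      apply mul_nonneg (mul_nonneg (sq_nonneg β) hA0) (by linarith)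
    have t3 : α * β ^ 2 * (α * (Ga - Gb)) ≤ α * β ^ 2 * (A * B - A ^ 2) :=
      mul_le_mul_of_nonneg_left hGbound (by positivity)
    nlinarith [t1, t2, t3]
  have hpos : (0:ℝ) < α ^ 2 * β ^ 2 := by positivity
  exact le_of_mul_le_mul_left key hpos
end

section
/- Let S := argmin_{w ≥ 0} ‖c - M(w - w̄)‖² and γ := min_{w ≥ 0} ‖c - M(w - w̄)‖². For p ≥ 1, let (w_p, y_p) be the unique minimizer of ½‖w - w̄‖² + (p/2)‖y‖² over the set {(w,y) : M(w - w̄) + y = c, w ≥ 0}. Then ‖w_p - w̄‖ ≤ ‖w∞ - w̄‖ where w∞ is the projection of w̄ onto S, and ‖y_p‖² ≤ (1/p)‖w∞ - w̄‖² + γ; consequently ‖y_p‖² → γ as p → ∞. -/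
theorem stmt_7 (n m : ℕ)
    (M : EuclideanSpace ℝ (Fin n) →L[ℝ] EuclideanSpace ℝ (Fin m))
    (c : EuclideanSpace ℝ (Fin m)) (wbar winf : EuclideanSpace ℝ (Fin n)) (γ : ℝ)
    -- γ is the minimum value of ‖c - M(w - w̄)‖² over w ≥ 0
    (hγ : ∀ w : EuclideanSpace ℝ (Fin n), (∀ i, 0 ≤ w i) → γ ≤ ‖c - M (w - wbar)‖ ^ 2)
    -- w∞ ∈ S and is the projection of w̄ onto S
    (hwinf_nonneg : ∀ i, 0 ≤ winf i)
    (hwinf_opt : ‖c - M (winf - wbar)‖ ^ 2 = γ)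
    (hwinf_proj : ∀ w : EuclideanSpace ℝ (Fin n), (∀ i, 0 ≤ w i) →
        ‖c - M (w - wbar)‖ ^ 2 = γ → ‖winf - wbar‖ ≤ ‖w - wbar‖)
    -- (w_p, y_p) is the minimizer of the penalized problem over F
    (wp : ℝ → EuclideanSpace ℝ (Fin n)) (yp : ℝ → EuclideanSpace ℝ (Fin m))
    (hfeas : ∀ p, M (wp p - wbar) + yp p = c ∧ ∀ i, 0 ≤ wp p i)
    (hmin : ∀ p, 1 ≤ p → ∀ (w : EuclideanSpace ℝ (Fin n)) (y : EuclideanSpace ℝ (Fin m)),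
        M (w - wbar) + y = c → (∀ i, 0 ≤ w i) →
        ‖wp p - wbar‖ ^ 2 / 2 + p / 2 * ‖yp p‖ ^ 2 ≤ ‖w - wbar‖ ^ 2 / 2 + p / 2 * ‖y‖ ^ 2) :
    (∀ p, 1 ≤ p → ‖wp p - wbar‖ ≤ ‖winf - wbar‖ ∧
        ‖yp p‖ ^ 2 ≤ (1 / p) * ‖winf - wbar‖ ^ 2 + γ) ∧
    Filter.Tendsto (fun p => ‖yp p‖ ^ 2) Filter.atTop (nhds γ) := by
  have hlow : ∀ p : ℝ, γ ≤ ‖yp p‖ ^ 2 := by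
    intro p
    obtain ⟨hfe, hnn⟩ := hfeas p
    have hyp : yp p = c - M (wp p - wbar) := by rw [← hfe]; abel
    rw [hyp]; exact hγ _ hnn
  have key : ∀ p : ℝ, 1 ≤ p → ‖wp p - wbar‖ ≤ ‖winf - wbar‖ ∧
      ‖yp p‖ ^ 2 ≤ (1 / p) * ‖winf - wbar‖ ^ 2 + γ := by
    intro p hp
    have hp0 : (0:ℝ) < p := lt_of_lt_of_le one_pos hp
    have hyinf : M (winf - wbar) + (c - M (winf - wbar)) = c := by abel
    have h := hmin p hp winf (c - M (winf - wbar)) hyinf hwinf_nonneg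
    rw [hwinf_opt] at h
    have hlp := hlow p
    constructor
    · nlinarith [norm_nonneg (wp p - wbar), norm_nonneg (winf - wbar)]
    · nlinarith [one_div_mul_cancel hp0.ne', one_div_nonneg.mpr hp0.le,
        sq_nonneg ‖wp p - wbar‖]
  refine ⟨key, ?_⟩
  have hub : Filter.Tendsto (fun p : ℝ => (1 / p) * ‖winf - wbar‖ ^ 2 + γ)
      Filter.atTop (nhds γ) := by
    have h0 : Filter.Tendsto (fun p : ℝ => p⁻¹) Filter.atTop (nhds 0) :=
      tendsto_inv_atTop_zero
    have := (h0.mul_const (‖winf - wbar‖ ^ 2)).add_const γ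
    simpa [one_div] using this
  exact tendsto_of_tendsto_of_tendsto_of_le_of_le' tendsto_const_nhds hub
    (Filter.Eventually.of_forall hlow)
    (Filter.eventually_atTop.mpr ⟨1, fun p hp => (key p hp).2⟩)
end

section
/- Every limit point of the family {w_p}_{p≥1} of solutions of the penalized problem solves the limiting problem: if w_{p_k} → w̃ along a subsequence with p_k → ∞, then w̃ ∈ S and w̃ minimizes ‖w - w̄‖ over S, i.e. w̃ = w∞. -/
/-!
Comparing the penalized minimizer `w_p` with `w∞` gives
`‖w_p - w̄‖² + p ‖y_p‖² ≤ ‖w∞ - w̄‖² + p γ`. Since `‖y_p‖² ≥ γ`, this bounds `‖w_p - w̄‖` by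
`‖w∞ - w̄‖` and forces `‖y_p‖² ≤ γ + ‖w∞ - w̄‖² / p`, so in the limit `w̃ ∈ S` and `w̃` is at
least as close to `w̄` as `w∞`. As `S` is convex, its point nearest to `w̄` is unique.
-/

open Filter Topology

def nonnegOrthant (ι : Type*) : Set (EuclideanSpace ℝ ι) := {w | ∀ i, 0 ≤ w i}

theorem isClosed_nonnegOrthant (ι : Type*) : IsClosed (nonnegOrthant ι) := by
  simp only [nonnegOrthant, Set.ofPred_forall]
  exact isClosed_iInter fun i => isClosed_le continuous_const (EuclideanSpace.proj i).continuous

theorem convex_nonnegOrthant (ι : Type*) : Convex ℝ (nonnegOrthant ι) := by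
  simp only [nonnegOrthant, Set.ofPred_forall]
  exact convex_iInter fun i => convex_halfSpace_ge (EuclideanSpace.proj i).isLinear 0

theorem Convex.sep_norm_sq_affineMap_le {E F : Type*} [AddCommGroup E] [Module ℝ E]
    [SeminormedAddCommGroup F] [NormedSpace ℝ F] {K : Set E} (hK : Convex ℝ K)
    (A : E →ᵃ[ℝ] F) (r : ℝ) : Convex ℝ {x ∈ K | ‖A x‖ ^ 2 ≤ r} :=
  have hconv : ConvexOn ℝ Set.univ (fun y : F => ‖y‖ ^ 2) :=
    (convexOn_norm convex_univ).pow (fun _ _ => norm_nonneg _) 2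
  ((hconv.comp_affineMap A).subset (Set.subset_univ K) hK).convex_le r

theorem Convex.eq_of_isMinOn_norm_sub {E : Type*} [NormedAddCommGroup E] [NormedSpace ℝ E]
    [StrictConvexSpace ℝ E] {S : Set E} (hS : Convex ℝ S) {a x y : E} (hx : x ∈ S) (hy : y ∈ S)
    (hxmin : IsMinOn (‖· - a‖) S x) (hymin : IsMinOn (‖· - a‖) S y) : x = y := by
  rw [isMinOn_iff] at hxmin hymin
  by_contra hne
  have hmid : (1 / 2 : ℝ) • x + (1 / 2 : ℝ) • y ∈ S :=
    hS hx hy (by norm_num) (by norm_num) (by norm_num)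
  have hlt : ‖(1 / 2 : ℝ) • (x - a) + (1 / 2 : ℝ) • (y - a)‖ < ‖x - a‖ :=
    norm_combo_lt_of_ne le_rfl (hymin x hx) (sub_left_injective.ne hne) (by norm_num)
      (by norm_num) (by norm_num)
  have hymid := hymin _ hmid
  rw [show (1 / 2 : ℝ) • x + (1 / 2 : ℝ) • y - a =
      (1 / 2 : ℝ) • (x - a) + (1 / 2 : ℝ) • (y - a) by module] at hymid
  linarith [hxmin y hy]

section Penalty

variable {X ι : Type*} [TopologicalSpace X] {l : Filter ι} {K : Set X} {f g : X → ℝ}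
  {x₀ x : X} {u : ι → X} {p : ι → ℝ}

theorem penalized_limit_le [l.NeBot] (hf : Continuous f) (hx₀ : IsMinOn g K x₀)
    (hp : ∀ᶠ k in l, 0 ≤ p k)
    (hu : ∀ᶠ k in l, u k ∈ K ∧ f (u k) + p k * g (u k) ≤ f x₀ + p k * g x₀)
    (hux : Tendsto u l (𝓝 x)) : f x ≤ f x₀ := by
  refine le_of_tendsto ((hf.tendsto x).comp hux) ?_
  filter_upwards [hp, hu] with k hpk ⟨huK, hcmp⟩
  have hgu : p k * g x₀ ≤ p k * g (u k) := mul_le_mul_of_nonneg_left (hx₀ huK) hpk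
  rw [Function.comp_apply]
  linarith

theorem penalized_limit_mem_and_eq [l.NeBot] (hK : IsClosed K) (hf : Continuous f)
    (hg : Continuous g) (hx₀ : IsMinOn g K x₀) (hp : Tendsto p l atTop)
    (hu : ∀ᶠ k in l, u k ∈ K ∧ f (u k) + p k * g (u k) ≤ f x₀ + p k * g x₀)
    (hux : Tendsto u l (𝓝 x)) : x ∈ K ∧ g x = g x₀ := by
  have hxK : x ∈ K := hK.mem_of_tendsto hux (hu.mono fun _ h => h.1)
  have hbound : Tendsto (fun k => g x₀ + (f x₀ - f (u k)) / p k) l (𝓝 (g x₀)) := by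
    simpa using (((hf.tendsto x).comp hux).const_sub (f x₀)).div_atTop hp |>.const_add (g x₀)
  have hgx : g x ≤ g x₀ := by
    refine le_of_tendsto_of_tendsto ((hg.tendsto x).comp hux) hbound ?_
    filter_upwards [hp.eventually_gt_atTop 0, hu] with k hpk ⟨_, hcmp⟩
    rw [Function.comp_apply, ← sub_le_iff_le_add', le_div_iff₀ hpk]
    linarith
  exact ⟨hxK, le_antisymm hgx (hx₀ hxK)⟩

end Penalty

theorem stmt_9_general (n m : ℕ)
    (M : EuclideanSpace ℝ (Fin n) →L[ℝ] EuclideanSpace ℝ (Fin m))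
    (c : EuclideanSpace ℝ (Fin m)) (wbar winf : EuclideanSpace ℝ (Fin n)) (γ : ℝ)
    (hγ : ∀ w : EuclideanSpace ℝ (Fin n), (∀ i, 0 ≤ w i) → γ ≤ ‖c - M (w - wbar)‖ ^ 2)
    (hwinf_nonneg : ∀ i, 0 ≤ winf i)
    (hwinf_opt : ‖c - M (winf - wbar)‖ ^ 2 = γ)
    (hwinf_proj : ∀ w : EuclideanSpace ℝ (Fin n), (∀ i, 0 ≤ w i) →
        ‖c - M (w - wbar)‖ ^ 2 = γ → ‖winf - wbar‖ ≤ ‖w - wbar‖)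
    (wp : ℝ → EuclideanSpace ℝ (Fin n)) (yp : ℝ → EuclideanSpace ℝ (Fin m))
    (hfeas : ∀ p, M (wp p - wbar) + yp p = c ∧ ∀ i, 0 ≤ wp p i)
    (hmin : ∀ p, 1 ≤ p → ∀ (w : EuclideanSpace ℝ (Fin n)) (y : EuclideanSpace ℝ (Fin m)),
        M (w - wbar) + y = c → (∀ i, 0 ≤ w i) →
        ‖wp p - wbar‖ ^ 2 / 2 + p / 2 * ‖yp p‖ ^ 2 ≤ ‖w - wbar‖ ^ 2 / 2 + p / 2 * ‖y‖ ^ 2)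
    -- a convergent subsequence with p_k → ∞
    (pk : ℕ → ℝ)
    (hpk : Filter.Tendsto pk Filter.atTop Filter.atTop)
    (wt : EuclideanSpace ℝ (Fin n))
    (hconv : Filter.Tendsto (fun k => wp (pk k)) Filter.atTop (nhds wt)) :
    ((∀ i, 0 ≤ wt i) ∧ ‖c - M (wt - wbar)‖ ^ 2 = γ) ∧ wt = winf := by
  let K := nonnegOrthant (Fin n)
  let f : EuclideanSpace ℝ (Fin n) → ℝ := fun w => ‖w - wbar‖ ^ 2
  let g : EuclideanSpace ℝ (Fin n) → ℝ := fun w => ‖c - M (w - wbar)‖ ^ 2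
  have hf : Continuous f := by fun_prop
  have hg : Continuous g := by fun_prop
  have hg_min : IsMinOn g K winf := fun w hw => hwinf_opt.trans_le (hγ w hw)
  have hu : ∀ᶠ k in atTop, wp (pk k) ∈ K ∧
      f (wp (pk k)) + pk k * g (wp (pk k)) ≤ f winf + pk k * g winf := by
    filter_upwards [hpk.eventually_ge_atTop 1] with k hk
    obtain ⟨hres, hwp⟩ := hfeas (pk k)
    have hcmp := hmin (pk k) hk winf _ (add_sub_cancel _ _) hwinf_nonneg
    rw [eq_sub_of_add_eq' hres] at hcmp
    exact ⟨hwp, by linarith⟩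
  obtain ⟨hwt, hgwt⟩ :=
    penalized_limit_mem_and_eq (isClosed_nonnegOrthant _) hf hg hg_min hpk hu hconv
  have hwt_opt : ‖c - M (wt - wbar)‖ ^ 2 = γ := hgwt.trans hwinf_opt
  have hfwt : ‖wt - wbar‖ ≤ ‖winf - wbar‖ := (sq_le_sq₀ (norm_nonneg _) (norm_nonneg _)).1 <|
    penalized_limit_le hf hg_min (hpk.eventually_ge_atTop 0) hu hconv
  let A : EuclideanSpace ℝ (Fin n) →ᵃ[ℝ] EuclideanSpace ℝ (Fin m) :=
    AffineMap.const ℝ _ c -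
      M.toLinearMap.toAffineMap.comp (AffineMap.id ℝ _ - AffineMap.const ℝ _ wbar)
  let S := {w ∈ K | ‖A w‖ ^ 2 ≤ γ}
  have hS : Convex ℝ S := (convex_nonnegOrthant _).sep_norm_sq_affineMap_le _ γ
  have hwinf_min : IsMinOn (‖· - wbar‖) S winf :=
    fun w hw => hwinf_proj w hw.1 (le_antisymm hw.2 (hγ w hw.1))
  have hwt_min : IsMinOn (‖· - wbar‖) S wt := fun w hw => hfwt.trans (hwinf_min hw)
  exact ⟨⟨hwt, hwt_opt⟩, hS.eq_of_isMinOn_norm_sub ⟨hwt, hwt_opt.le⟩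
    ⟨hwinf_nonneg, hwinf_opt.le⟩ hwt_min hwinf_min⟩

theorem stmt_9 (n m : ℕ)
    (M : EuclideanSpace ℝ (Fin n) →L[ℝ] EuclideanSpace ℝ (Fin m))
    (c : EuclideanSpace ℝ (Fin m)) (wbar winf : EuclideanSpace ℝ (Fin n)) (γ : ℝ)
    (hγ : ∀ w : EuclideanSpace ℝ (Fin n), (∀ i, 0 ≤ w i) → γ ≤ ‖c - M (w - wbar)‖ ^ 2)
    (hwinf_nonneg : ∀ i, 0 ≤ winf i)
    (hwinf_opt : ‖c - M (winf - wbar)‖ ^ 2 = γ)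
    (hwinf_proj : ∀ w : EuclideanSpace ℝ (Fin n), (∀ i, 0 ≤ w i) →
        ‖c - M (w - wbar)‖ ^ 2 = γ → ‖winf - wbar‖ ≤ ‖w - wbar‖)
    (wp : ℝ → EuclideanSpace ℝ (Fin n)) (yp : ℝ → EuclideanSpace ℝ (Fin m))
    (hfeas : ∀ p, M (wp p - wbar) + yp p = c ∧ ∀ i, 0 ≤ wp p i)
    (hmin : ∀ p, 1 ≤ p → ∀ (w : EuclideanSpace ℝ (Fin n)) (y : EuclideanSpace ℝ (Fin m)),
        M (w - wbar) + y = c → (∀ i, 0 ≤ w i) →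
        ‖wp p - wbar‖ ^ 2 / 2 + p / 2 * ‖yp p‖ ^ 2 ≤ ‖w - wbar‖ ^ 2 / 2 + p / 2 * ‖y‖ ^ 2)
    -- a convergent subsequence with p_k → ∞
    (pk : ℕ → ℝ) (hpk1 : ∀ k, 1 ≤ pk k)
    (hpk : Filter.Tendsto pk Filter.atTop Filter.atTop)
    (wt : EuclideanSpace ℝ (Fin n))
    (hconv : Filter.Tendsto (fun k => wp (pk k)) Filter.atTop (nhds wt)) :
    ((∀ i, 0 ≤ wt i) ∧ ‖c - M (wt - wbar)‖ ^ 2 = γ) ∧ wt = winf :=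
  stmt_9_general n m M c wbar winf γ hγ hwinf_nonneg hwinf_opt hwinf_proj wp yp hfeas hmin pk hpk wt
    hconv
end
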